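/- Two finite trunks are order-isomorphic if and only if they have the same number of elements on each level: if P and Q are finite partial orders in which incomparability is transitive, then there exists an order isomorphism between P and Q if and only if for every natural number k, the number of elements of P of level k equals the number of elements of Q of level k. -/

import Mathlib

/-- Two elements of a partial order are incomparable if neither is `≤` the other. -/
def Incomp {P : Type*} [PartialOrder P] (x y : P) : Prop := x ≠ y ∧ ¬x ≤ y ∧ ¬y ≤ x

/-- The level of an element `x` of a finite partial order: one less than the maximum
cardinality of a chain whose greatest element is `x`. -/
noncomputable def level {P : Type*} [PartialOrder P] [Fintype P] (x : P) : ℕ :=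
  sSup {n : ℕ | ∃ C : Finset P,
    IsChain (· ≤ ·) (C : Set P) ∧ x ∈ C ∧ (∀ y ∈ C, y ≤ x) ∧ C.card = n} - 1

namespace TrunkAux

variable {P : Type*} [PartialOrder P] [Fintype P]

def chainSet (x : P) : Set ℕ :=
  {n : ℕ | ∃ C : Finset P,
    IsChain (· ≤ ·) (C : Set P) ∧ x ∈ C ∧ (∀ y ∈ C, y ≤ x) ∧ C.card = n}

lemma level_eq (x : P) : level x = sSup (chainSet x) - 1 := rfl

lemma one_mem_chainSet (x : P) : 1 ∈ chainSet x := by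
  refine ⟨{x}, ?_, Finset.mem_singleton_self x, ?_, Finset.card_singleton x⟩
  · simpa using Set.subsingleton_singleton.isChain
  · intro y hy; simp_all

lemma chainSet_nonempty (x : P) : (chainSet x).Nonempty := ⟨1, one_mem_chainSet x⟩

lemma chainSet_bddAbove (x : P) : BddAbove (chainSet x) := by
  refine ⟨Fintype.card P, ?_⟩
  rintro n ⟨C, -, -, -, rfl⟩
  exact (Finset.card_le_univ C).trans_eq (Finset.card_univ)

lemma sSup_chainSet (x : P) : sSup (chainSet x) = level x + 1 := by
  have h1 : 1 ≤ sSup (chainSet x) := le_csSup (chainSet_bddAbove x) (one_mem_chainSet x)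
  rw [level_eq]; omega

lemma exists_level_chain (x : P) : ∃ C : Finset P,
    IsChain (· ≤ ·) (C : Set P) ∧ x ∈ C ∧ (∀ y ∈ C, y ≤ x) ∧ C.card = level x + 1 := by
  have := Nat.sSup_mem (chainSet_nonempty x) (chainSet_bddAbove x)
  rw [sSup_chainSet] at this
  exact this

lemma le_level_of_mem {x : P} {n : ℕ} (h : n ∈ chainSet x) : n ≤ level x + 1 := by
  have := le_csSup (chainSet_bddAbove x) h
  rwa [sSup_chainSet] at this

lemma level_lt_of_lt {x y : P} (h : x < y) : level x < level y := by
  classical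
  obtain ⟨C, hC, hxC, hle, hcard⟩ := exists_level_chain x
  have hyC : y ∉ C := fun hy => absurd (hle y hy) h.not_ge
  have mem : C.card + 1 ∈ chainSet y := by
    refine ⟨insert y C, ?_, Finset.mem_insert_self _ _, ?_, ?_⟩
    · rw [Finset.coe_insert]
      exact hC.insert (fun b hb _ => Or.inr ((hle b hb).trans h.le))
    · intro z hz
      rcases Finset.mem_insert.mp hz with rfl | hz
      · exact le_rfl
      · exact (hle z hz).trans h.le
    · rw [Finset.card_insert_of_notMem hyC]
  have := le_level_of_mem mem
  omega

lemma incomp_symm {x y : P} (h : Incomp x y) : Incomp y x := ⟨h.1.symm, h.2.2, h.2.1⟩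

lemma level_le_of_incomp (hP : ∀ x y z : P, x ≠ z → Incomp x y → Incomp y z → Incomp x z)
    {x y : P} (h : Incomp x y) : level x ≤ level y := by
  classical
  obtain ⟨C, hC, hxC, hle, hcard⟩ := exists_level_chain x
  have key : ∀ z ∈ C.erase x, z ≤ y := by
    intro z hz
    have hzx : z ≠ x := Finset.ne_of_mem_erase hz
    have hzC : z ∈ C := Finset.mem_of_mem_erase hz
    by_cases hzy : z ≤ y
    · exact hzy
    by_cases hyz : y ≤ z
    · exact absurd (hyz.trans (hle z hzC)) h.2.2
    · have hne : y ≠ z := fun e => hyz (e ▸ le_rfl)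
      have : Incomp x z := hP x y z hzx.symm h ⟨hne, hyz, hzy⟩
      exact absurd (hle z hzC) this.2.2
  have hyE : y ∉ C.erase x := by
    intro hy
    exact h.2.2 (hle y (Finset.mem_of_mem_erase hy))
  have mem : level x + 1 ∈ chainSet y := by
    refine ⟨insert y (C.erase x), ?_, Finset.mem_insert_self _ _, ?_, ?_⟩
    · rw [Finset.coe_insert]
      have hsub : (↑(C.erase x) : Set P) ⊆ ↑C := by
        exact_mod_cast Finset.coe_subset.mpr (Finset.erase_subset _ _)
      exact (hC.mono hsub).insert (fun b hb _ => Or.inr (key b hb))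
    · intro z hz
      rcases Finset.mem_insert.mp hz with rfl | hz
      · exact le_rfl
      · exact key z hz
    · rw [Finset.card_insert_of_notMem hyE, Finset.card_erase_of_mem hxC]
      have : 1 ≤ C.card := Finset.card_pos.mpr ⟨x, hxC⟩
      omega
  have := le_level_of_mem mem
  omega

lemma level_eq_of_incomp (hP : ∀ x y z : P, x ≠ z → Incomp x y → Incomp y z → Incomp x z)
    {x y : P} (h : Incomp x y) : level x = level y :=
  le_antisymm (level_le_of_incomp hP h) (level_le_of_incomp hP (incomp_symm h))

lemma trunk_le_iff (hP : ∀ x y z : P, x ≠ z → Incomp x y → Incomp y z → Incomp x z)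
    (x y : P) : x ≤ y ↔ x = y ∨ level x < level y := by
  constructor
  · intro h
    rcases eq_or_lt_of_le h with rfl | h
    · exact Or.inl rfl
    · exact Or.inr (level_lt_of_lt h)
  · rintro (rfl | h)
    · exact le_rfl
    by_contra hxy
    by_cases hyx : y ≤ x
    · rcases eq_or_lt_of_le hyx with rfl | hlt
      · omega
      · exact absurd (level_lt_of_lt hlt) (by omega)
    · have : Incomp x y := ⟨fun e => hxy (e ▸ le_rfl), hxy, hyx⟩
      exact absurd (level_eq_of_incomp hP this) (by omega)

lemma level_le_map {Q : Type*} [PartialOrder Q] [Fintype Q] (e : P ≃o Q) (x : P) :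
    level x ≤ level (e x) := by
  classical
  have hsub : chainSet x ⊆ chainSet (e x) := by
    rintro n ⟨C, hC, hxC, hle, rfl⟩
    refine ⟨C.image e, ?_, Finset.mem_image_of_mem _ hxC, ?_,
      Finset.card_image_of_injective C e.injective⟩
    · rw [Finset.coe_image]
      exact hC.image_of_map_rel _ _ _ (fun a b hab => e.map_rel_iff.mpr hab)
    · intro z hz
      obtain ⟨w, hw, rfl⟩ := Finset.mem_image.mp hz
      exact e.map_rel_iff.mpr (hle w hw)
  have := csSup_le_csSup (chainSet_bddAbove (e x)) (chainSet_nonempty x) hsub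
  rw [sSup_chainSet, sSup_chainSet] at this
  omega

lemma level_map {Q : Type*} [PartialOrder Q] [Fintype Q] (e : P ≃o Q) (x : P) :
    level (e x) = level x := by
  refine le_antisymm ?_ (level_le_map e x)
  have := level_le_map e.symm (e x)
  rwa [e.symm_apply_apply] at this

end TrunkAux

open TrunkAux
/-- Two finite trunks (partial orders with transitive incomparability) are
order-isomorphic if and only if they have the same number of elements on each
level. -/
theorem finite_trunks_isomorphic_iff_level_sizes
    {P Q : Type*} [PartialOrder P] [PartialOrder Q] [Fintype P] [Fintype Q]
    (hP : ∀ x y z : P, x ≠ z → Incomp x y → Incomp y z → Incomp x z)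
    (hQ : ∀ x y z : Q, x ≠ z → Incomp x y → Incomp y z → Incomp x z) :
    Nonempty (P ≃o Q) ↔
      ∀ k : ℕ, {x : P | level x = k}.ncard = {y : Q | level y = k}.ncard := by
  constructor
  · rintro ⟨e⟩ k
    have himg : {y : Q | level y = k} = (e : P → Q) '' {x : P | level x = k} := by
      ext y
      simp only [Set.mem_setOf_eq, Set.mem_image]
      constructor
      · intro hy
        refine ⟨e.symm y, ?_, e.apply_symm_apply y⟩
        simpa [level_map e.symm y] using hy
      · rintro ⟨x, hx, rfl⟩
        simpa [level_map e x] using hx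
    rw [himg, Set.ncard_image_of_injective _ e.injective]
  · intro h
    have key : ∀ k : ℕ, Nonempty ({a : P // level a = k} ≃ {b : Q // level b = k}) := by
      intro k
      have h1 : Nat.card {a : P // level a = k} = Nat.card {b : Q // level b = k} := by
        have h2 : Nat.card ↥{x : P | level x = k} = Nat.card ↥{y : Q | level y = k} := by
          rw [Nat.card_coe_set_eq, Nat.card_coe_set_eq]; exact h k
        exact h2
      have : Fintype {a : P // level a = k} := Fintype.ofFinite _
      have : Fintype {b : Q // level b = k} := Fintype.ofFinite _
      refine ⟨Fintype.equivOfCardEq ?_⟩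
      rwa [← Nat.card_eq_fintype_card, ← Nat.card_eq_fintype_card]
    let e : P ≃ Q := Equiv.ofFiberEquiv (f := level) (g := level)
      (fun k => Classical.choice (key k))
    have hlev : ∀ a : P, level (e a) = level a := fun a =>
      Equiv.ofFiberEquiv_map (f := level) (g := level) _ a
    refine ⟨{ toEquiv := e, map_rel_iff' := ?_ }⟩
    intro a b
    rw [trunk_le_iff hQ, trunk_le_iff hP]
    simp [hlev, e.apply_eq_iff_eq]
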